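/- Let 0 < c₁ ≤ c₂, C ≥ 0, and ℓ(t) = ½(√(t + c₁) + √(t + c₂) − C)² for t ≥ 0. Then ℓ''(t) ≤ (C/4)·(1/(t+c₁)^{3/2} + 1/(t+c₂)^{3/2}) for all t ≥ 0. -/

import Mathlib

/-!
Write `a = √(t + c₁)`, `b = √(t + c₂)` and `ℓ = ½ f²` with `f = a + b - C`. Then
`ℓ'' = f'² + f f''` with `f' = 1/(2a) + 1/(2b)` and `f'' = -(1/(4a³) + 1/(4b³))`, so that
`ℓ'' - (C/4)(1/a³ + 1/b³) = (2/(ab) - a/b³ - b/a³)/4`, which is nonpositive since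
`a/b³ + b/a³ - 2/(ab) = (a² - b²)²/(a³b³)`.
-/

open Real

lemma two_div_mul_le_div_pow_three_add_div_pow_three {a b : ℝ} (ha : 0 < a) (hb : 0 < b) :
    2 / (a * b) ≤ a / b ^ 3 + b / a ^ 3 := by
  have hsq : a / b ^ 3 + b / a ^ 3 - 2 / (a * b) = (a ^ 2 - b ^ 2) ^ 2 / (a ^ 3 * b ^ 3) := by
    field_simp
    ring
  have : 0 ≤ (a ^ 2 - b ^ 2) ^ 2 / (a ^ 3 * b ^ 3) := by positivity
  linarith

lemma inv_two_mul_add_sq_sub_le {a b : ℝ} (C : ℝ) (ha : 0 < a) (hb : 0 < b) :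
    ((2 * a)⁻¹ + (2 * b)⁻¹) ^ 2 - (a + b - C) * ((4 * a ^ 3)⁻¹ + (4 * b ^ 3)⁻¹) ≤
      C / 4 * (1 / a ^ 3 + 1 / b ^ 3) := by
  have hdiff : ((2 * a)⁻¹ + (2 * b)⁻¹) ^ 2 - (a + b - C) * ((4 * a ^ 3)⁻¹ + (4 * b ^ 3)⁻¹) -
      C / 4 * (1 / a ^ 3 + 1 / b ^ 3) = (2 / (a * b) - (a / b ^ 3 + b / a ^ 3)) / 4 := by
    field_simp
    ring
  linarith [two_div_mul_le_div_pow_three_add_div_pow_three ha hb]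

lemma rpow_three_halves_eq_sqrt_pow {x : ℝ} (hx : 0 ≤ x) : x ^ ((3 : ℝ) / 2) = √x ^ 3 := by
  rw [rpow_div_two_eq_sqrt 3 hx]
  norm_cast

section Derivatives

variable {c x : ℝ}

lemma hasDerivAt_sqrt_add_const (h : 0 < x + c) :
    HasDerivAt (fun u => √(u + c)) (2 * √(x + c))⁻¹ x := by
  simpa [one_div] using ((hasDerivAt_id x).add_const c).sqrt h.ne'

lemma hasDerivAt_inv_two_mul_sqrt_add_const (h : 0 < x + c) :
    HasDerivAt (fun u => (2 * √(u + c))⁻¹) (-(4 * √(x + c) ^ 3)⁻¹) x := by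
  have hs : 0 < √(x + c) := sqrt_pos.mpr h
  refine (((hasDerivAt_sqrt_add_const h).const_mul 2).inv (by positivity)).congr_deriv ?_
  field_simp
  ring

variable {c₁ c₂ C : ℝ}

lemma hasDerivAt_sqrt_add_sqrt_sub (h₁ : 0 < x + c₁) (h₂ : 0 < x + c₂) :
    HasDerivAt (fun t => √(t + c₁) + √(t + c₂) - C)
      ((2 * √(x + c₁))⁻¹ + (2 * √(x + c₂))⁻¹) x :=
  ((hasDerivAt_sqrt_add_const h₁).add (hasDerivAt_sqrt_add_const h₂)).sub_const C

lemma hasDerivAt_half_sq_sqrt_add_sqrt_sub (h₁ : 0 < x + c₁) (h₂ : 0 < x + c₂) :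
    HasDerivAt (fun t => 1 / 2 * (√(t + c₁) + √(t + c₂) - C) ^ 2)
      ((√(x + c₁) + √(x + c₂) - C) * ((2 * √(x + c₁))⁻¹ + (2 * √(x + c₂))⁻¹)) x := by
  refine (((hasDerivAt_sqrt_add_sqrt_sub h₁ h₂).pow 2).const_mul (1 / 2 : ℝ)).congr_deriv ?_
  ring

lemma deriv_deriv_half_sq_sqrt_add_sqrt_sub (h₁ : 0 < x + c₁) (h₂ : 0 < x + c₂) :
    deriv (deriv fun t => 1 / 2 * (√(t + c₁) + √(t + c₂) - C) ^ 2) x =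
      ((2 * √(x + c₁))⁻¹ + (2 * √(x + c₂))⁻¹) ^ 2 -
        (√(x + c₁) + √(x + c₂) - C) * ((4 * √(x + c₁) ^ 3)⁻¹ + (4 * √(x + c₂) ^ 3)⁻¹) := by
  have hderiv : (deriv fun t => 1 / 2 * (√(t + c₁) + √(t + c₂) - C) ^ 2) =ᶠ[nhds x]
      fun t => (√(t + c₁) + √(t + c₂) - C) * ((2 * √(t + c₁))⁻¹ + (2 * √(t + c₂))⁻¹) := by
    filter_upwards [eventually_gt_nhds (neg_lt_iff_pos_add.mpr h₁),
      eventually_gt_nhds (neg_lt_iff_pos_add.mpr h₂)] with t ht₁ ht₂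
    exact (hasDerivAt_half_sq_sqrt_add_sqrt_sub (neg_lt_iff_pos_add.mp ht₁)
      (neg_lt_iff_pos_add.mp ht₂)).deriv
  have hf' : HasDerivAt (fun t => (2 * √(t + c₁))⁻¹ + (2 * √(t + c₂))⁻¹)
      (-(4 * √(x + c₁) ^ 3)⁻¹ + -(4 * √(x + c₂) ^ 3)⁻¹) x :=
    (hasDerivAt_inv_two_mul_sqrt_add_const h₁).add (hasDerivAt_inv_two_mul_sqrt_add_const h₂)
  rw [hderiv.deriv_eq]
  exact ((hasDerivAt_sqrt_add_sqrt_sub h₁ h₂).mul hf').deriv.trans (by ring)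

end Derivatives

theorem stmt_5_general (c₁ c₂ C : ℝ) (hc₁ : 0 < c₁) (hc₂ : c₁ ≤ c₂)
    (ℓ : ℝ → ℝ)
    (hℓ : ℓ = fun t => (1 / 2) * (Real.sqrt (t + c₁) + Real.sqrt (t + c₂) - C) ^ 2) :
    ∀ t : ℝ, 0 ≤ t →
      deriv (deriv ℓ) t ≤
        (C / 4) * (1 / (t + c₁) ^ ((3 : ℝ) / 2) + 1 / (t + c₂) ^ ((3 : ℝ) / 2)) := by
  intro t ht
  have h₁ : 0 < t + c₁ := by linarith
  have h₂ : 0 < t + c₂ := by linarith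
  rw [hℓ, deriv_deriv_half_sq_sqrt_add_sqrt_sub h₁ h₂, rpow_three_halves_eq_sqrt_pow h₁.le,
    rpow_three_halves_eq_sqrt_pow h₂.le]
  exact inv_two_mul_add_sq_sub_le C (sqrt_pos.mpr h₁) (sqrt_pos.mpr h₂)

theorem stmt_5 (c₁ c₂ C : ℝ) (hc₁ : 0 < c₁) (hc₂ : c₁ ≤ c₂) (hC : 0 ≤ C)
    (ℓ : ℝ → ℝ)
    (hℓ : ℓ = fun t => (1 / 2) * (Real.sqrt (t + c₁) + Real.sqrt (t + c₂) - C) ^ 2) :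
    ∀ t : ℝ, 0 ≤ t →
      deriv (deriv ℓ) t ≤
        (C / 4) * (1 / (t + c₁) ^ ((3 : ℝ) / 2) + 1 / (t + c₂) ^ ((3 : ℝ) / 2)) :=
  stmt_5_general c₁ c₂ C hc₁ hc₂ ℓ hℓ
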